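/- arXiv:1306.0537 — 4 statements merged into one kernel-verified Lean document; each statement's English description precedes it below -/
import Mathlib

section
/- Let f be a multiplicative function from the positive integers to the complex numbers that is bounded in mean square, i.e., limsup_{x→∞} (1/x) ∑_{n≤x} |f(n)|² < ∞. Suppose that for every nonnegative integer k, the arithmetic function n ↦ f(n)·(n/σ(n))^k possesses a mean value (that is, (1/x) ∑_{n≤x} f(n)(n/σ(n))^k converges to a complex limit as x → ∞). Then for every real u ∈ [0,1], the limit D_f(u) := lim_{x→∞} (1/x) ∑_{n≤x, n/σ(n)≤u} f(n) exists, and D_f(u) is continuous as a function of u on [0,1]. -/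
/-!
Polynomials in `n/σ(n)` have mean values against `f`, and by Weierstrass a continuous ramp
approximates the indicator of `n/σ(n) ≤ u` uniformly except on a short window around `u`. By
Cauchy–Schwarz and the mean-square bound, the integers whose ratio `n/σ(n)` falls into such a
window contribute little, provided the window has small upper density; this makes the truncated
means Cauchy in `N` and their limit continuous in `u`.

Short windows do have small density. Near `0` this is Markov's inequality for
`∑_{n ≤ N} σ(n)/n ≤ 2N`. Near `u > 0`, take `M = ∑_{p < L} 1/p` large: by Turán–Kubilius most
`n` have at least `M/2` prime factors below `L`. If `p ∥ n` then `n/σ(n)` is multiplied by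
`1 + 1/p` when passing to `n/p`, so the shifted windows attached to distinct primes are
disjoint. Hence the integers `n ≤ N` of the window carry at most `2N` prime factors below `L` in
total, and at most `4N/M` of them can have `M/2` such factors.
-/

open Filter ArithmeticFunction

/-- The ratio `n/σ(n)` as a real number. -/
noncomputable def sigmaRatio (n : ℕ) : ℝ := (n : ℝ) / ((sigma 1 n : ℕ) : ℝ)

open Finset Polynomial

section DoubleCounting

variable {ι : Type*} (D : Finset ι) (φ : ι → ℕ) (N : ℕ)

theorem sum_sum_filter_dvd_eq (w : ι → ℝ) :
    ∑ n ∈ Icc 1 N, ∑ i ∈ D with φ i ∣ n, w i = ∑ i ∈ D, ((N / φ i : ℕ) : ℝ) * w i := by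
  simp_rw [sum_filter]
  rw [sum_comm]
  refine sum_congr rfl fun i _ => ?_
  rw [← sum_filter, sum_const, nsmul_eq_mul, ← Nat.Ioc_filter_dvd_card_eq_div]
  rfl

theorem sum_sum_filter_dvd_le {w : ι → ℝ} (hw : ∀ i ∈ D, 0 ≤ w i) :
    ∑ n ∈ Icc 1 N, ∑ i ∈ D with φ i ∣ n, w i ≤ N * ∑ i ∈ D, w i / φ i := by
  rw [sum_sum_filter_dvd_eq, mul_sum]
  refine sum_le_sum fun i hi => ?_
  calc ((N / φ i : ℕ) : ℝ) * w i ≤ (N / φ i : ℝ) * w i :=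
        mul_le_mul_of_nonneg_right Nat.cast_div_le (hw i hi)
    _ = N * (w i / φ i) := by ring

theorem sum_card_filter_dvd_le :
    ∑ n ∈ Icc 1 N, (#{i ∈ D | φ i ∣ n} : ℝ) ≤ N * ∑ i ∈ D, (φ i : ℝ)⁻¹ := by
  have h := sum_sum_filter_dvd_le D φ N (w := fun _ => 1) fun _ _ => zero_le_one
  simpa only [sum_const, nsmul_eq_mul, mul_one, one_div] using h

end DoubleCounting

theorem sum_norm_le_sqrt_card_mul {ι E : Type*} [SeminormedAddCommGroup E] (f : ι → E)
    {s t : Finset ι} (hst : s ⊆ t) :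
    ∑ i ∈ s, ‖f i‖ ≤ √(#s * ∑ i ∈ t, ‖f i‖ ^ 2) :=
  Real.le_sqrt_of_sq_le <| sq_sum_le_card_mul_sum_sq.trans <|
    mul_le_mul_of_nonneg_left
      (sum_le_sum_of_subset_of_nonneg hst fun _ _ _ => sq_nonneg _) (Nat.cast_nonneg _)

theorem cauchySeq_of_forall_eventually_dist_le {α ι : Type*} [PseudoMetricSpace α] [Nonempty ι]
    [SemilatticeSup ι] {x : ι → α} (h : ∀ ε > 0, ∃ z, ∀ᶠ n in atTop, dist (x n) z ≤ ε) :
    CauchySeq x := by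
  refine Metric.cauchySeq_iff'.2 fun ε hε => ?_
  obtain ⟨z, hz⟩ := h (ε / 3) (by positivity)
  obtain ⟨N, hN⟩ := eventually_atTop.1 hz
  refine ⟨N, fun n hn => ?_⟩
  calc dist (x n) (x N) ≤ dist (x n) z + dist (x N) z := dist_triangle_right _ _ _
    _ ≤ ε / 3 + ε / 3 := add_le_add (hN n hn) (hN N le_rfl)
    _ < ε := by linarith

theorem abs_ite_sub_ramp_le (u x : ℝ) {δ : ℝ} (hδ : 0 < δ) :
    |(if x ≤ u then 1 else 0) - max 0 (min 1 ((u + δ - x) / δ))| ≤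
      if |x - u| ≤ δ then 1 else 0 := by
  rcases le_or_gt x u with hxu | hux
  · have : 1 ≤ (u + δ - x) / δ := by rw [le_div_iff₀ hδ]; linarith
    simp only [hxu, if_true, min_eq_left this, max_eq_right zero_le_one, sub_self, abs_zero]
    split_ifs <;> norm_num
  rcases le_or_gt x (u + δ) with hxδ | hδx
  · rw [if_neg (not_le.2 hux), if_pos (abs_le.2 ⟨by linarith, by linarith⟩), zero_sub, abs_neg,
      abs_of_nonneg (le_max_left _ _)]
    exact max_le zero_le_one (min_le_left _ _)
  · have hw : ¬ |x - u| ≤ δ := fun h => by linarith [(abs_le.1 h).2]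
    have : (u + δ - x) / δ ≤ 0 := div_nonpos_of_nonpos_of_nonneg (by linarith) hδ.le
    simp [not_le.2 hux, hw, this]

theorem exists_polynomial_approx_ite_le (a b u : ℝ) {δ η : ℝ} (hδ : 0 < δ) (hη : 0 < η) :
    ∃ P : ℝ[X], ∀ x ∈ Set.Icc a b,
      |(if x ≤ u then 1 else 0) - P.eval x| ≤ η + if |x - u| ≤ δ then 1 else 0 := by
  have hramp : Continuous fun x : ℝ => max 0 (min 1 ((u + δ - x) / δ)) := by fun_prop
  obtain ⟨P, hP⟩ := exists_polynomial_near_of_continuousOn a b _ hramp.continuousOn η hη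
  refine ⟨P, fun x hx => ?_⟩
  calc |(if x ≤ u then 1 else 0) - P.eval x|
      ≤ |(if x ≤ u then 1 else 0) - max 0 (min 1 ((u + δ - x) / δ))|
        + |max 0 (min 1 ((u + δ - x) / δ)) - P.eval x| := abs_sub_le _ _ _
    _ ≤ η + if |x - u| ≤ δ then 1 else 0 := by
      linarith [abs_ite_sub_ramp_le u x hδ, abs_sub_comm (P.eval x) _ ▸ hP x hx]

def AtomlessInDensity (g : ℕ → ℝ) : Prop :=
  ∀ u : ℝ, ∀ ε > 0, ∃ δ > 0, ∀ᶠ N : ℕ in atTop, (#{n ∈ Icc 1 N | |g n - u| ≤ δ} : ℝ) ≤ ε * N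

noncomputable def truncatedMean (f : ℕ → ℂ) (g : ℕ → ℝ) (u : ℝ) (N : ℕ) : ℂ :=
  (N : ℂ)⁻¹ * ∑ n ∈ Icc 1 N with g n ≤ u, f n

section TruncatedMean

variable {f : ℕ → ℂ} {g : ℕ → ℝ}

theorem sum_norm_le_of_card_le {C η : ℝ} {N : ℕ} {s : Finset ℕ} (hs : s ⊆ Icc 1 N)
    (hC : ∑ n ∈ Icc 1 N, ‖f n‖ ^ 2 ≤ C * N) (hη : (#s : ℝ) ≤ η * N) :
    ∑ n ∈ s, ‖f n‖ ≤ √(η * C) * N := by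
  calc ∑ n ∈ s, ‖f n‖ ≤ √(#s * ∑ n ∈ Icc 1 N, ‖f n‖ ^ 2) := sum_norm_le_sqrt_card_mul f hs
    _ ≤ √(η * N * (C * N)) :=
        Real.sqrt_le_sqrt <| mul_le_mul hη hC (sum_nonneg fun _ _ => sq_nonneg _)
          ((Nat.cast_nonneg _).trans hη)
    _ = √(η * C) * N := by
        rw [show η * N * (C * N) = η * C * N ^ 2 by ring, Real.sqrt_mul' _ (sq_nonneg _),
          Real.sqrt_sq (Nat.cast_nonneg _)]

theorem exists_sum_norm_near_le {C : ℝ}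
    (hC : ∀ᶠ N : ℕ in atTop, ∑ n ∈ Icc 1 N, ‖f n‖ ^ 2 ≤ C * N) (hg : AtomlessInDensity g)
    (u : ℝ) {ε : ℝ} (hε : 0 < ε) :
    ∃ δ > 0, ∀ᶠ N : ℕ in atTop, ∑ n ∈ Icc 1 N with |g n - u| ≤ δ, ‖f n‖ ≤ ε * N := by
  obtain ⟨δ, hδ, hW⟩ := hg u (ε ^ 2 / (|C| + 1)) (by positivity)
  refine ⟨δ, hδ, ?_⟩
  filter_upwards [hC, hW] with N hCN hWN
  refine (sum_norm_le_of_card_le (filter_subset _ _) hCN hWN).trans <|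
    mul_le_mul_of_nonneg_right ?_ (Nat.cast_nonneg _)
  rw [Real.sqrt_le_left hε.le, div_mul_eq_mul_div, div_le_iff₀ (by positivity)]
  nlinarith [le_abs_self C, sq_nonneg ε]

theorem norm_truncatedMean_sub_le {u v w δ ε : ℝ} {N : ℕ} (hN : 0 < N) (hu : |u - w| ≤ δ)
    (hv : |v - w| ≤ δ) (hW : ∑ n ∈ Icc 1 N with |g n - w| ≤ δ, ‖f n‖ ≤ ε * N) :
    ‖truncatedMean f g v N - truncatedMean f g u N‖ ≤ ε := by
  wlog huv : u ≤ v generalizing u v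
  · rw [norm_sub_rev]; exact this hv hu (le_of_not_ge huv)
  have hsub : {n ∈ Icc 1 N | g n ≤ u} ⊆ {n ∈ Icc 1 N | g n ≤ v} :=
    monotone_filter_right _ fun _ _ h => h.trans huv
  have hwindow : {n ∈ Icc 1 N | g n ≤ v} \ {n ∈ Icc 1 N | g n ≤ u} ⊆
      {n ∈ Icc 1 N | |g n - w| ≤ δ} := by
    intro n hn
    rw [Finset.mem_sdiff, mem_filter, mem_filter, not_and, not_le] at hn
    rw [mem_filter]
    obtain ⟨⟨hnN, hnv⟩, hnu⟩ := hn
    exact ⟨hnN, abs_le.2 ⟨by linarith [(abs_le.1 hu).1, hnu hnN], by linarith [(abs_le.1 hv).2]⟩⟩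
  have hN' : (0 : ℝ) < N := Nat.cast_pos.2 hN
  rw [truncatedMean, truncatedMean, ← mul_sub, ← sum_sdiff_eq_sub hsub, norm_mul, norm_inv,
    Complex.norm_natCast, inv_mul_le_iff₀ hN', mul_comm]
  calc ‖∑ n ∈ _ \ _, f n‖ ≤ ∑ n ∈ _ \ _, ‖f n‖ := norm_sum_le _ _
    _ ≤ ∑ n ∈ Icc 1 N with |g n - w| ≤ δ, ‖f n‖ :=
        sum_le_sum_of_subset_of_nonneg hwindow fun _ _ _ => norm_nonneg _
    _ ≤ ε * N := hW

theorem exists_tendsto_mean_mul_eval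
    (hmean : ∀ k : ℕ, ∃ c : ℂ, Tendsto (fun N : ℕ => (N : ℂ)⁻¹ * ∑ n ∈ Icc 1 N,
      f n * ((g n : ℝ) : ℂ) ^ k) atTop (nhds c)) (P : ℝ[X]) :
    ∃ c : ℂ, Tendsto (fun N : ℕ => (N : ℂ)⁻¹ * ∑ n ∈ Icc 1 N,
      f n * ((P.eval (g n) : ℝ) : ℂ)) atTop (nhds c) := by
  induction P using Polynomial.induction_on' with
  | add P Q hP hQ =>
    obtain ⟨c, hc⟩ := hP
    obtain ⟨d, hd⟩ := hQ
    refine ⟨c + d, (hc.add hd).congr fun N => ?_⟩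
    simp only [eval_add, Complex.ofReal_add, mul_add, sum_add_distrib]
  | monomial k a =>
    obtain ⟨c, hc⟩ := hmean k
    refine ⟨a * c, (hc.const_mul (a : ℂ)).congr fun N => ?_⟩
    simp only [eval_monomial, Complex.ofReal_mul, Complex.ofReal_pow, mul_sum]
    exact sum_congr rfl fun _ _ => by ring

theorem norm_truncatedMean_sub_mean_eval_le {P : ℝ[X]} {u δ η B ε : ℝ} {N : ℕ} (hN : 0 < N)
    (hη : 0 ≤ η)
    (hP : ∀ n, |(if g n ≤ u then 1 else 0) - P.eval (g n)| ≤ η + if |g n - u| ≤ δ then 1 else 0)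
    (hB : ∑ n ∈ Icc 1 N, ‖f n‖ ≤ B * N)
    (hW : ∑ n ∈ Icc 1 N with |g n - u| ≤ δ, ‖f n‖ ≤ ε * N) :
    ‖truncatedMean f g u N - (N : ℂ)⁻¹ * ∑ n ∈ Icc 1 N, f n * ((P.eval (g n) : ℝ) : ℂ)‖ ≤
      η * B + ε := by
  have hN' : (0 : ℝ) < N := Nat.cast_pos.2 hN
  have hterm : ∀ n, ‖(if g n ≤ u then f n else 0) - f n * ((P.eval (g n) : ℝ) : ℂ)‖ ≤
      η * ‖f n‖ + if |g n - u| ≤ δ then ‖f n‖ else 0 := fun n => by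
    have : (if g n ≤ u then f n else 0) - f n * ((P.eval (g n) : ℝ) : ℂ) =
        f n * (((if g n ≤ u then 1 else 0) - P.eval (g n) : ℝ) : ℂ) := by
      split_ifs <;> push_cast <;> ring
    rw [this, norm_mul, Complex.norm_real, Real.norm_eq_abs]
    calc ‖f n‖ * |(if g n ≤ u then 1 else 0) - P.eval (g n)|
        ≤ ‖f n‖ * (η + if |g n - u| ≤ δ then 1 else 0) :=
          mul_le_mul_of_nonneg_left (hP n) (norm_nonneg _)
      _ = η * ‖f n‖ + if |g n - u| ≤ δ then ‖f n‖ else 0 := by split_ifs <;> ring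
  rw [truncatedMean, ← mul_sub, sum_filter, ← sum_sub_distrib, norm_mul, norm_inv,
    Complex.norm_natCast, inv_mul_le_iff₀ hN']
  calc ‖∑ n ∈ Icc 1 N, ((if g n ≤ u then f n else 0) - f n * ((P.eval (g n) : ℝ) : ℂ))‖
      ≤ ∑ n ∈ Icc 1 N, (η * ‖f n‖ + if |g n - u| ≤ δ then ‖f n‖ else 0) :=
        (norm_sum_le _ _).trans (sum_le_sum fun n _ => hterm n)
    _ = η * ∑ n ∈ Icc 1 N, ‖f n‖ + ∑ n ∈ Icc 1 N with |g n - u| ≤ δ, ‖f n‖ := by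
        rw [sum_add_distrib, mul_sum, sum_filter]
    _ ≤ η * (B * N) + ε * N := add_le_add (mul_le_mul_of_nonneg_left hB hη) hW
    _ = N * (η * B + ε) := by ring

variable {a b C : ℝ}

theorem exists_eventually_dist_truncatedMean_le
    (hC : ∀ᶠ N : ℕ in atTop, ∑ n ∈ Icc 1 N, ‖f n‖ ^ 2 ≤ C * N) (hg : AtomlessInDensity g)
    (hgab : ∀ n, g n ∈ Set.Icc a b)
    (hmean : ∀ k : ℕ, ∃ c : ℂ, Tendsto (fun N : ℕ => (N : ℂ)⁻¹ * ∑ n ∈ Icc 1 N,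
      f n * ((g n : ℝ) : ℂ) ^ k) atTop (nhds c))
    (u : ℝ) {ε : ℝ} (hε : 0 < ε) :
    ∃ z : ℂ, ∀ᶠ N in atTop, dist (truncatedMean f g u N) z ≤ ε := by
  obtain ⟨δ, hδ, hW⟩ := exists_sum_norm_near_le hC hg u (by positivity : 0 < ε / 3)
  set η := ε / (3 * (√C + 1))
  obtain ⟨P, hP⟩ := exists_polynomial_approx_ite_le a b u hδ (by positivity : 0 < η)
  obtain ⟨z, hz⟩ := exists_tendsto_mean_mul_eval hmean P
  have hηC : η * √C ≤ ε / 3 := by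
    rw [div_mul_eq_mul_div, div_le_div_iff₀ (by positivity) (by positivity)]
    nlinarith [Real.sqrt_nonneg C]
  refine ⟨z, ?_⟩
  filter_upwards [hC, hW, eventually_gt_atTop 0,
    hz.eventually (Metric.closedBall_mem_nhds z (by positivity : 0 < ε / 3))] with N hCN hWN hN hzN
  have hB : ∑ n ∈ Icc 1 N, ‖f n‖ ≤ √(1 * C) * N :=
    sum_norm_le_of_card_le subset_rfl hCN (by simp)
  rw [one_mul] at hB
  calc dist (truncatedMean f g u N) z
      ≤ dist (truncatedMean f g u N) ((N : ℂ)⁻¹ * ∑ n ∈ Icc 1 N, f n * ((P.eval (g n) : ℝ) : ℂ))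
        + dist ((N : ℂ)⁻¹ * ∑ n ∈ Icc 1 N, f n * ((P.eval (g n) : ℝ) : ℂ)) z := dist_triangle _ _ _
    _ ≤ (η * √C + ε / 3) + ε / 3 := by
        rw [dist_eq_norm]
        exact add_le_add (norm_truncatedMean_sub_mean_eval_le hN (by positivity)
          (fun n => hP _ (hgab n)) hB hWN) hzN
    _ ≤ ε := by linarith

theorem exists_continuous_tendsto_truncatedMean
    (hC : ∀ᶠ N : ℕ in atTop, ∑ n ∈ Icc 1 N, ‖f n‖ ^ 2 ≤ C * N) (hg : AtomlessInDensity g)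
    (hgab : ∀ n, g n ∈ Set.Icc a b)
    (hmean : ∀ k : ℕ, ∃ c : ℂ, Tendsto (fun N : ℕ => (N : ℂ)⁻¹ * ∑ n ∈ Icc 1 N,
      f n * ((g n : ℝ) : ℂ) ^ k) atTop (nhds c)) :
    ∃ D : ℝ → ℂ, Continuous D ∧ ∀ u, Tendsto (truncatedMean f g u) atTop (nhds (D u)) := by
  have hcauchy : ∀ u, CauchySeq (truncatedMean f g u) := fun u =>
    cauchySeq_of_forall_eventually_dist_le fun ε hε =>
      exists_eventually_dist_truncatedMean_le hC hg hgab hmean u hε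
  choose D hD using fun u => cauchySeq_tendsto_of_complete (hcauchy u)
  refine ⟨D, Metric.continuous_iff.2 fun u ε hε => ?_, hD⟩
  obtain ⟨δ, hδ, hW⟩ := exists_sum_norm_near_le hC hg u (half_pos hε)
  refine ⟨δ, hδ, fun v hv => ?_⟩
  have hclose : ∀ᶠ N in atTop, dist (truncatedMean f g v N) (truncatedMean f g u N) ≤ ε / 2 := by
    filter_upwards [hW, eventually_gt_atTop 0] with N hWN hN
    rw [dist_eq_norm]
    exact norm_truncatedMean_sub_le hN (by simp [hδ.le]) (Real.dist_eq v u ▸ hv.le) hWN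
  linarith [le_of_tendsto ((hD v).dist (hD u)) hclose]

end TruncatedMean

theorem le_sigma_one_self (n : ℕ) : n ≤ sigma 1 n := by
  rcases n.eq_zero_or_pos with rfl | hn
  · exact le_rfl
  rw [sigma_one_apply]
  exact single_le_sum (fun d _ => Nat.zero_le d) (Nat.mem_divisors_self n hn.ne')

theorem sigmaRatio_mem_Icc (n : ℕ) : sigmaRatio n ∈ Set.Icc 0 1 :=
  ⟨by unfold sigmaRatio; positivity,
    div_le_one_of_le₀ (by exact_mod_cast le_sigma_one_self n) (Nat.cast_nonneg _)⟩

theorem sigmaRatio_pos {n : ℕ} (hn : 0 < n) : 0 < sigmaRatio n :=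
  div_pos (Nat.cast_pos.2 hn) (Nat.cast_pos.2 (hn.trans_le (le_sigma_one_self n)))

theorem inv_sigmaRatio (n : ℕ) : (sigmaRatio n)⁻¹ = ∑ d ∈ n.divisors, (d : ℝ)⁻¹ := by
  rw [sigmaRatio, inv_div, sigma_one_apply, Nat.cast_sum, sum_div,
    ← Nat.sum_div_divisors n fun d => (d : ℝ)⁻¹]
  refine sum_congr rfl fun d hd => ?_
  rw [Nat.cast_div (Nat.dvd_of_mem_divisors hd)
    (Nat.cast_ne_zero.2 (Nat.pos_of_mem_divisors hd).ne'), inv_div]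

theorem sigmaRatio_mul_prime {p m : ℕ} (hp : p.Prime) (hpm : ¬ p ∣ m) :
    sigmaRatio (p * m) * (1 + (p : ℝ)⁻¹) = sigmaRatio m := by
  have hm : 0 < m := Nat.pos_of_ne_zero fun h => hpm (h ▸ dvd_zero p)
  have hσ : sigma 1 (p * m) = (1 + p) * sigma 1 m := by
    rw [isMultiplicative_sigma.map_mul_of_coprime ((Nat.Prime.coprime_iff_not_dvd hp).2 hpm),
      ← pow_one p, sigma_one_apply_prime_pow hp]
    simp [sum_range_succ]
  have hp0 : (p : ℝ) ≠ 0 := Nat.cast_ne_zero.2 hp.ne_zero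
  have hσ0 : ((sigma 1 m : ℕ) : ℝ) ≠ 0 := Nat.cast_ne_zero.2 (hm.trans_le (le_sigma_one_self m)).ne'
  rw [sigmaRatio, sigmaRatio, hσ]
  push_cast
  field_simp
  ring

theorem divisors_eq_filter_dvd {n N : ℕ} (hn : 0 < n) (hnN : n ≤ N) :
    n.divisors = {d ∈ Icc 1 N | d ∣ n} := by
  ext d
  simp only [Nat.mem_divisors, mem_filter, mem_Icc]
  constructor
  · rintro ⟨hd, -⟩
    exact ⟨⟨Nat.pos_of_dvd_of_pos hd hn, (Nat.le_of_dvd hn hd).trans hnN⟩, hd⟩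
  · rintro ⟨-, hd⟩
    exact ⟨hd, hn.ne'⟩

theorem sum_inv_sigmaRatio_le (N : ℕ) : ∑ n ∈ Icc 1 N, (sigmaRatio n)⁻¹ ≤ 2 * N := by
  have hdiv : ∀ n ∈ Icc 1 N, (sigmaRatio n)⁻¹ = ∑ d ∈ Icc 1 N with d ∣ n, (d : ℝ)⁻¹ :=
    fun n hn => by rw [inv_sigmaRatio, divisors_eq_filter_dvd (mem_Icc.1 hn).1 (mem_Icc.1 hn).2]
  have hIoo : Ioo 0 (N + 1) = Icc 1 N := by ext; simp; omega
  have hsq : ∑ d ∈ Icc 1 N, (d : ℝ)⁻¹ / d ≤ 2 := by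
    simpa [hIoo, div_eq_mul_inv, ← mul_inv, ← sq] using sum_Ioo_inv_sq_le (α := ℝ) 0 (N + 1)
  rw [sum_congr rfl hdiv]
  calc _ ≤ N * ∑ d ∈ Icc 1 N, (d : ℝ)⁻¹ / d :=
        sum_sum_filter_dvd_le _ (fun d => d) N fun _ _ => by positivity
    _ ≤ N * 2 := mul_le_mul_of_nonneg_left hsq (Nat.cast_nonneg _)
    _ = 2 * N := mul_comm _ _

theorem card_filter_sigmaRatio_le_le (N : ℕ) {δ : ℝ} (hδ : 0 < δ) :
    (#{n ∈ Icc 1 N | sigmaRatio n ≤ δ} : ℝ) ≤ 2 * δ * N := by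
  have hmarkov : #{n ∈ Icc 1 N | sigmaRatio n ≤ δ} • δ⁻¹ ≤ ∑ n ∈ Icc 1 N, (sigmaRatio n)⁻¹ := by
    refine (card_nsmul_le_sum _ _ _ fun n hn => ?_).trans <|
      sum_le_sum_of_subset_of_nonneg (filter_subset _ _) fun n _ _ => ?_
    · obtain ⟨hn, hnδ⟩ := mem_filter.1 hn
      exact inv_anti₀ (sigmaRatio_pos (mem_Icc.1 hn).1) hnδ
    · exact inv_nonneg.2 (sigmaRatio_mem_Icc n).1
  rw [nsmul_eq_mul] at hmarkov
  have := hmarkov.trans (sum_inv_sigmaRatio_le N)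
  rw [mul_inv_le_iff₀ hδ] at this
  linarith

def omegaBelow (L n : ℕ) : ℕ := #{p ∈ L.primesBelow | p ∣ n}

noncomputable def primeRecipSum (L : ℕ) : ℝ := ∑ p ∈ L.primesBelow, (p : ℝ)⁻¹

theorem primeRecipSum_nonneg (L : ℕ) : 0 ≤ primeRecipSum L :=
  sum_nonneg fun _ _ => by positivity

theorem tendsto_primeRecipSum_atTop : Tendsto primeRecipSum atTop atTop := by
  refine ((not_summable_iff_tendsto_nat_atTop_of_nonneg fun n => ?_).1
    not_summable_one_div_on_primes).congr fun L => ?_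
  · exact Set.indicator_nonneg (fun _ _ => by positivity) n
  · simp [primeRecipSum, Nat.primesBelow, sum_filter, Set.indicator_apply]

theorem sum_omegaBelow_le (L N : ℕ) :
    ∑ n ∈ Icc 1 N, (omegaBelow L n : ℝ) ≤ N * primeRecipSum L :=
  sum_card_filter_dvd_le L.primesBelow (fun p => p) N

theorem le_sum_omegaBelow (L N : ℕ) :
    N * primeRecipSum L - L ≤ ∑ n ∈ Icc 1 N, (omegaBelow L n : ℝ) := by
  have hcount := sum_sum_filter_dvd_eq L.primesBelow (fun p => p) N fun _ => (1 : ℝ)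
  simp only [sum_const, nsmul_eq_mul, mul_one] at hcount
  have hfloor : ∀ p ∈ L.primesBelow, (N : ℝ) * (p : ℝ)⁻¹ - 1 ≤ ((N / p : ℕ) : ℝ) :=
    fun p _ => by
      have h := Nat.sub_one_lt_floor ((N : ℝ) / p)
      rw [Nat.floor_div_natCast, Nat.floor_natCast] at h
      exact h.le
  have hcard : (#L.primesBelow : ℝ) ≤ L := by
    exact_mod_cast (card_filter_le _ _).trans (card_range L).le
  calc N * primeRecipSum L - L ≤ ∑ p ∈ L.primesBelow, ((N : ℝ) * (p : ℝ)⁻¹ - 1) := by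
        rw [sum_sub_distrib, ← mul_sum, sum_const, nsmul_eq_mul, mul_one, primeRecipSum]
        linarith
    _ ≤ _ := (sum_le_sum hfloor).trans_eq hcount.symm

theorem omegaBelow_sq (L n : ℕ) :
    omegaBelow L n ^ 2 = #{x ∈ L.primesBelow ×ˢ L.primesBelow | x.1.lcm x.2 ∣ n} := by
  rw [omegaBelow, sq, ← card_product, ← filter_product]
  simp only [Nat.lcm_dvd_iff]

theorem inv_lcm_le {p q : ℕ} (hp : p.Prime) (hq : q.Prime) :
    ((p.lcm q : ℕ) : ℝ)⁻¹ ≤ ((p : ℝ) * q)⁻¹ + if p = q then (p : ℝ)⁻¹ else 0 := by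
  by_cases hpq : p = q
  · subst hpq
    simp only [Nat.lcm_self, if_true, le_add_iff_nonneg_left]
    positivity
  · rw [if_neg hpq, add_zero, Nat.Coprime.lcm_eq_mul ((Nat.coprime_primes hp hq).2 hpq),
      Nat.cast_mul]

theorem sum_omegaBelow_sq_le (L N : ℕ) :
    ∑ n ∈ Icc 1 N, (omegaBelow L n : ℝ) ^ 2 ≤
      N * (primeRecipSum L ^ 2 + primeRecipSum L) := by
  have hpairs : ∑ x ∈ L.primesBelow ×ˢ L.primesBelow, ((x.1.lcm x.2 : ℕ) : ℝ)⁻¹ ≤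
      primeRecipSum L ^ 2 + primeRecipSum L := by
    calc _ ≤ ∑ x ∈ L.primesBelow ×ˢ L.primesBelow,
          (((x.1 : ℝ) * x.2)⁻¹ + if x.1 = x.2 then (x.1 : ℝ)⁻¹ else 0) :=
          sum_le_sum fun x hx => inv_lcm_le (Nat.prime_of_mem_primesBelow (mem_product.1 hx).1)
            (Nat.prime_of_mem_primesBelow (mem_product.1 hx).2)
      _ = _ := by
          rw [sum_add_distrib, sum_product, sum_product, sq, primeRecipSum, sum_mul_sum]
          congr 1
          · simp_rw [mul_inv]
          · exact sum_congr rfl fun p hp => by rw [sum_ite_eq, if_pos hp]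
  have hcast : ∀ n, (omegaBelow L n : ℝ) ^ 2 =
      #{x ∈ L.primesBelow ×ˢ L.primesBelow | x.1.lcm x.2 ∣ n} := fun n => by
    rw [← omegaBelow_sq, Nat.cast_pow]
  rw [sum_congr rfl fun n _ => hcast n]
  have := sum_card_filter_dvd_le (L.primesBelow ×ˢ L.primesBelow) (fun x => x.1.lcm x.2) N
  exact this.trans <| mul_le_mul_of_nonneg_left hpairs (Nat.cast_nonneg _)

theorem sum_sq_omegaBelow_sub_le (L N : ℕ) :
    ∑ n ∈ Icc 1 N, ((omegaBelow L n : ℝ) - primeRecipSum L) ^ 2 ≤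
      N * primeRecipSum L + 2 * primeRecipSum L * L := by
  set M := primeRecipSum L
  have hexpand : ∑ n ∈ Icc 1 N, ((omegaBelow L n : ℝ) - M) ^ 2 =
      ∑ n ∈ Icc 1 N, (omegaBelow L n : ℝ) ^ 2 - 2 * M * ∑ n ∈ Icc 1 N, (omegaBelow L n : ℝ)
        + N * M ^ 2 := by
    simp only [sub_sq, sum_add_distrib, sum_sub_distrib, sum_const, Nat.card_Icc,
      add_tsub_cancel_right, nsmul_eq_mul, ← sum_mul, ← mul_sum]
    ring
  have hfirst := mul_le_mul_of_nonneg_left (le_sum_omegaBelow L N)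
    (mul_nonneg zero_le_two (primeRecipSum_nonneg L))
  rw [hexpand]
  nlinarith [sum_omegaBelow_sq_le L N]

theorem card_filter_omegaBelow_lt_le (L N : ℕ) (hM : 0 < primeRecipSum L) :
    (#{n ∈ Icc 1 N | (omegaBelow L n : ℝ) < primeRecipSum L / 2} : ℝ) ≤
      4 * (N + 2 * L) / primeRecipSum L := by
  set M := primeRecipSum L
  have hchebyshev : #{n ∈ Icc 1 N | (omegaBelow L n : ℝ) < M / 2} • (M / 2) ^ 2 ≤
      ∑ n ∈ Icc 1 N, ((omegaBelow L n : ℝ) - M) ^ 2 := by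
    refine (card_nsmul_le_sum _ _ _ fun n hn => ?_).trans <|
      sum_le_sum_of_subset_of_nonneg (filter_subset _ _) fun n _ _ => sq_nonneg _
    have hω := (mem_filter.1 hn).2
    nlinarith [(Nat.cast_nonneg _ : (0 : ℝ) ≤ omegaBelow L n)]
  rw [nsmul_eq_mul] at hchebyshev
  rw [le_div_iff₀ hM]
  nlinarith [sum_sq_omegaBelow_sub_le L N]

theorem inv_sq_lt_abs_inv_sub_inv {p q L : ℕ} (hp : 0 < p) (hq : 0 < q) (hpL : p < L)
    (hqL : q < L) (hpq : p ≠ q) : ((L : ℝ) ^ 2)⁻¹ < |(p : ℝ)⁻¹ - (q : ℝ)⁻¹| := by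
  wlog h : p < q generalizing p q
  · rw [abs_sub_comm]
    exact this hq hp hqL hpL hpq.symm (lt_of_le_of_ne (not_lt.1 h) hpq.symm)
  have hp' : (0 : ℝ) < p := Nat.cast_pos.2 hp
  have hq' : (0 : ℝ) < q := Nat.cast_pos.2 hq
  have hgap : (1 : ℝ) ≤ q - p := by
    have : (p : ℝ) + 1 ≤ q := by exact_mod_cast h
    linarith
  calc ((L : ℝ) ^ 2)⁻¹ < ((p : ℝ) * q)⁻¹ := by
        rw [sq]
        exact inv_strictAnti₀ (by positivity) (by exact_mod_cast Nat.mul_lt_mul'' hpL hqL)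
    _ ≤ (q - p) * ((p : ℝ) * q)⁻¹ := le_mul_of_one_le_left (by positivity) hgap
    _ = (p : ℝ)⁻¹ - (q : ℝ)⁻¹ := by field_simp
    _ ≤ _ := le_abs_self _

theorem abs_sigmaRatio_div_prime_sub_le {p n : ℕ} (hp : p.Prime) (hpn : p ∣ n)
    (hpn2 : ¬ p ^ 2 ∣ n) {u δ : ℝ} (h : |sigmaRatio n - u| ≤ δ) :
    |sigmaRatio (n / p) - u * (1 + (p : ℝ)⁻¹)| ≤ 2 * δ := by
  obtain ⟨m, rfl⟩ := hpn
  have hpm : ¬ p ∣ m := fun hm => hpn2 (by rw [sq]; exact mul_dvd_mul_left p hm)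
  have hinv : (p : ℝ)⁻¹ ≤ 1 := inv_le_one_of_one_le₀ (by exact_mod_cast hp.one_lt.le)
  rw [Nat.mul_div_cancel_left m hp.pos, ← sigmaRatio_mul_prime hp hpm, ← sub_mul, abs_mul,
    abs_of_pos (by positivity : (0 : ℝ) < 1 + (p : ℝ)⁻¹)]
  nlinarith [abs_nonneg (sigmaRatio (p * m) - u), inv_nonneg.2 (Nat.cast_nonneg p : (0 : ℝ) ≤ p)]

theorem sum_card_exact_dvd_sigmaRatio_near_le {u : ℝ} (hu : 0 < u) (L N : ℕ) :
    ∑ n ∈ Icc 1 N with |sigmaRatio n - u| ≤ u / (4 * L ^ 2),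
      #{p ∈ L.primesBelow | p ∣ n ∧ ¬ p ^ 2 ∣ n} ≤ N := by
  set δ := u / (4 * (L : ℝ) ^ 2)
  rw [← card_sigma]
  -- `(n, p) ↦ n / p` is injective: `sigmaRatio (n / p)` lies within `2δ` of `u * (1 + 1/p)`,
  -- and these points are more than `4δ` apart for distinct primes `p < L`.
  refine (card_le_card_of_injOn (fun x => x.1 / x.2) (fun x hx => ?_) ?_).trans_eq
    (Nat.card_Icc 1 N)
  · obtain ⟨hn, hp⟩ := mem_sigma.1 hx
    obtain ⟨hpL, hpn, -⟩ := mem_filter.1 hp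
    have hnN := mem_Icc.1 (mem_filter.1 hn).1
    exact mem_Icc.2 ⟨Nat.div_pos (Nat.le_of_dvd hnN.1 hpn) (Nat.prime_of_mem_primesBelow hpL).pos,
      (Nat.div_le_self _ _).trans hnN.2⟩
  · rintro ⟨n, p⟩ hx ⟨n', p'⟩ hx' (hdiv : n / p = n' / p')
    rw [mem_coe, mem_sigma, mem_filter, mem_filter] at hx hx'
    dsimp only at hx hx'
    obtain ⟨⟨-, hnu⟩, hpL, hpn, hpn2⟩ := hx
    obtain ⟨⟨-, hnu'⟩, hpL', hpn', hpn2'⟩ := hx'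
    have hp := Nat.prime_of_mem_primesBelow hpL
    have hp' := Nat.prime_of_mem_primesBelow hpL'
    obtain rfl : p = p' := by
      by_contra hne
      have h1 := abs_le.1 (abs_sigmaRatio_div_prime_sub_le hp hpn hpn2 hnu)
      have h2 := abs_le.1 (abs_sigmaRatio_div_prime_sub_le hp' hpn' hpn2' hnu')
      rw [← hdiv] at h2
      rw [mul_add, mul_one] at h1 h2
      have hclose : u * |(p : ℝ)⁻¹ - (p' : ℝ)⁻¹| ≤ u * ((L : ℝ) ^ 2)⁻¹ := by
        rw [← abs_of_pos hu, ← abs_mul, abs_of_pos hu, mul_sub,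
          show u * ((L : ℝ) ^ 2)⁻¹ = 4 * δ by ring]
        exact abs_le.2 ⟨by linarith, by linarith⟩
      exact (mul_lt_mul_of_pos_left (inv_sq_lt_abs_inv_sub_inv hp.pos hp'.pos
        (Nat.lt_of_mem_primesBelow hpL) (Nat.lt_of_mem_primesBelow hpL') hne) hu).not_ge hclose
    obtain rfl : n = n' := by
      rw [← Nat.mul_div_cancel' hpn, ← Nat.mul_div_cancel' hpn', hdiv]
    rfl

theorem sum_card_sq_dvd_le (L N : ℕ) :
    ∑ n ∈ Icc 1 N, (#{p ∈ L.primesBelow | p ^ 2 ∣ n} : ℝ) ≤ N := by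
  have hsub : L.primesBelow ⊆ Ioo 1 L := fun p hp =>
    mem_Ioo.2 ⟨Nat.one_lt_of_mem_primesBelow hp, Nat.lt_of_mem_primesBelow hp⟩
  have hsq : ∑ p ∈ L.primesBelow, (((p ^ 2 : ℕ) : ℝ))⁻¹ ≤ 1 := by
    push_cast
    refine (sum_le_sum_of_subset_of_nonneg hsub fun _ _ _ => by positivity).trans ?_
    simpa [one_add_one_eq_two] using sum_Ioo_inv_sq_le (α := ℝ) 1 L
  calc _ ≤ N * ∑ p ∈ L.primesBelow, (((p ^ 2 : ℕ) : ℝ))⁻¹ :=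
        sum_card_filter_dvd_le L.primesBelow (· ^ 2) N
    _ ≤ N * 1 := mul_le_mul_of_nonneg_left hsq (Nat.cast_nonneg _)
    _ = N := mul_one _

theorem sum_omegaBelow_sigmaRatio_near_le {u : ℝ} (hu : 0 < u) (L N : ℕ) :
    ∑ n ∈ Icc 1 N with |sigmaRatio n - u| ≤ u / (4 * L ^ 2), (omegaBelow L n : ℝ) ≤ 2 * N := by
  have hsplit : ∀ n, (omegaBelow L n : ℝ) ≤
      #{p ∈ L.primesBelow | p ∣ n ∧ ¬ p ^ 2 ∣ n} + #{p ∈ L.primesBelow | p ^ 2 ∣ n} := by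
    intro n
    have hsub : {p ∈ L.primesBelow | p ∣ n} ⊆
        {p ∈ L.primesBelow | p ∣ n ∧ ¬ p ^ 2 ∣ n} ∪ {p ∈ L.primesBelow | p ^ 2 ∣ n} := by
      intro p hp
      simp only [mem_union, mem_filter] at hp ⊢
      tauto
    exact_mod_cast (card_le_card hsub).trans (card_union_le _ _)
  have hexact := sum_card_exact_dvd_sigmaRatio_near_le hu L N
  calc _ ≤ ∑ n ∈ Icc 1 N with |sigmaRatio n - u| ≤ u / (4 * L ^ 2),
        ((#{p ∈ L.primesBelow | p ∣ n ∧ ¬ p ^ 2 ∣ n} : ℝ) + #{p ∈ L.primesBelow | p ^ 2 ∣ n}) :=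
        sum_le_sum fun n _ => hsplit n
    _ ≤ N + ∑ n ∈ Icc 1 N, (#{p ∈ L.primesBelow | p ^ 2 ∣ n} : ℝ) := by
        rw [sum_add_distrib]
        exact add_le_add (by exact_mod_cast hexact) <|
          sum_le_sum_of_subset_of_nonneg (filter_subset _ _) fun _ _ _ => Nat.cast_nonneg _
    _ ≤ 2 * N := by linarith [sum_card_sq_dvd_le L N]

theorem card_sigmaRatio_near_le {u : ℝ} (hu : 0 < u) (L N : ℕ) (hM : 0 < primeRecipSum L) :
    (#{n ∈ Icc 1 N | |sigmaRatio n - u| ≤ u / (4 * L ^ 2)} : ℝ) ≤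
      8 * (N + L) / primeRecipSum L := by
  set M := primeRecipSum L
  set W := {n ∈ Icc 1 N | |sigmaRatio n - u| ≤ u / (4 * L ^ 2)}
  have hmany : (#{n ∈ W | M / 2 ≤ omegaBelow L n} : ℝ) ≤ 4 * N / M := by
    have h := (card_nsmul_le_sum {n ∈ W | M / 2 ≤ omegaBelow L n} (fun n => (omegaBelow L n : ℝ))
      (M / 2) fun n hn => (mem_filter.1 hn).2).trans <|
      (sum_le_sum_of_subset_of_nonneg (filter_subset _ W) fun n _ _ => Nat.cast_nonneg _).trans
        (sum_omegaBelow_sigmaRatio_near_le hu L N)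
    rw [nsmul_eq_mul] at h
    rw [le_div_iff₀ hM]
    linarith
  have hcover : W ⊆ {n ∈ W | M / 2 ≤ omegaBelow L n} ∪
      {n ∈ Icc 1 N | (omegaBelow L n : ℝ) < M / 2} := by
    intro n hn
    rcases le_or_gt (M / 2) (omegaBelow L n) with h | h
    · exact mem_union_left _ (mem_filter.2 ⟨hn, h⟩)
    · exact mem_union_right _ (mem_filter.2 ⟨(mem_filter.1 hn).1, h⟩)
  calc (#W : ℝ) ≤ #{n ∈ W | M / 2 ≤ omegaBelow L n} +
        #{n ∈ Icc 1 N | (omegaBelow L n : ℝ) < M / 2} :=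
        by exact_mod_cast (card_le_card hcover).trans (card_union_le _ _)
    _ ≤ 4 * N / M + 4 * (N + 2 * L) / M :=
        add_le_add hmany (card_filter_omegaBelow_lt_le L N hM)
    _ = 8 * (N + L) / M := by ring

theorem atomlessInDensity_sigmaRatio : AtomlessInDensity sigmaRatio := by
  intro u ε hε
  rcases le_or_gt u 0 with hu | hu
  · refine ⟨ε / 2, half_pos hε, Eventually.of_forall fun N => ?_⟩
    have hsub : {n ∈ Icc 1 N | |sigmaRatio n - u| ≤ ε / 2} ⊆
        {n ∈ Icc 1 N | sigmaRatio n ≤ ε / 2} :=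
      monotone_filter_right _ fun _ _ h => by linarith [(abs_le.1 h).2]
    calc (#{n ∈ Icc 1 N | |sigmaRatio n - u| ≤ ε / 2} : ℝ)
        ≤ #{n ∈ Icc 1 N | sigmaRatio n ≤ ε / 2} := by exact_mod_cast card_le_card hsub
      _ ≤ 2 * (ε / 2) * N := card_filter_sigmaRatio_le_le N (half_pos hε)
      _ = ε * N := by ring
  obtain ⟨L, hL⟩ := (tendsto_primeRecipSum_atTop.eventually_ge_atTop (16 / ε)).exists
  have hM : 0 < primeRecipSum L := (by positivity : (0 : ℝ) < 16 / ε).trans_le hL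
  have hL0 : L ≠ 0 := by
    rintro rfl
    simp [primeRecipSum] at hM
  refine ⟨u / (4 * L ^ 2), by positivity, ?_⟩
  filter_upwards [eventually_ge_atTop L] with N hN
  have hLN : (L : ℝ) ≤ N := by exact_mod_cast hN
  refine (card_sigmaRatio_near_le hu L N hM).trans ?_
  rw [div_le_iff₀ hM]
  rw [div_le_iff₀ hε] at hL
  nlinarith [mul_le_mul_of_nonneg_left hL (Nat.cast_nonneg N : (0 : ℝ) ≤ N)]

theorem davenport_analogue_smallmult_general (f : ℕ → ℂ)
    (hms : ∃ C : ℝ, ∀ᶠ N : ℕ in atTop, ∑ n ∈ Finset.Icc 1 N, ‖f n‖ ^ 2 ≤ C * N)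
    (hmean : ∀ k : ℕ, ∃ c : ℂ,
      Tendsto (fun N : ℕ => (N : ℂ)⁻¹ * ∑ n ∈ Finset.Icc 1 N,
        f n * ((sigmaRatio n : ℝ) : ℂ) ^ k) atTop (nhds c)) :
    ∃ D : ℝ → ℂ, ContinuousOn D (Set.Icc 0 1) ∧
      ∀ u ∈ Set.Icc (0 : ℝ) 1,
        Tendsto (fun N : ℕ => (N : ℂ)⁻¹ *
            ∑ n ∈ (Finset.Icc 1 N).filter (fun n : ℕ => sigmaRatio n ≤ u), f n)
          atTop (nhds (D u)) := by
  obtain ⟨C, hC⟩ := hms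
  obtain ⟨D, hD, hlim⟩ := exists_continuous_tendsto_truncatedMean hC atomlessInDensity_sigmaRatio
    sigmaRatio_mem_Icc hmean
  exact ⟨D, hD.continuousOn, fun u _ => hlim u⟩

theorem davenport_analogue_smallmult (f : ℕ → ℂ)
    (hf1 : f 1 = 1)
    (hfmul : ∀ m n : ℕ, Nat.Coprime m n → f (m * n) = f m * f n)
    (hms : ∃ C : ℝ, ∀ᶠ N : ℕ in atTop, ∑ n ∈ Finset.Icc 1 N, ‖f n‖ ^ 2 ≤ C * N)
    (hmean : ∀ k : ℕ, ∃ c : ℂ,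
      Tendsto (fun N : ℕ => (N : ℂ)⁻¹ * ∑ n ∈ Finset.Icc 1 N,
        f n * ((sigmaRatio n : ℝ) : ℂ) ^ k) atTop (nhds c)) :
    ∃ D : ℝ → ℂ, ContinuousOn D (Set.Icc 0 1) ∧
      ∀ u ∈ Set.Icc (0 : ℝ) 1,
        Tendsto (fun N : ℕ => (N : ℂ)⁻¹ *
            ∑ n ∈ (Finset.Icc 1 N).filter (fun n : ℕ => sigmaRatio n ≤ u), f n)
          atTop (nhds (D u)) :=
  davenport_analogue_smallmult_general f hms hmean
end

section
/- Let f be a multiplicative function from the positive integers to the complex numbers that is bounded in mean square, and suppose that for every nonnegative integer k the function n ↦ f(n)·(n/σ(n))^k possesses a mean value, so that D_f(u) := lim_{x→∞} (1/x) ∑_{n≤x, n/σ(n)≤u} f(n) exists for all u ∈ [0,1]. Then for every u ∈ [0,1], lim_{x→∞} (1/x²) ∑_{n≤x, n/σ(n)≤u} n·f(n) = D_f(u)/2. -/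
open Filter ArithmeticFunction

/-!
Only partial summation is needed. With `S(m) = ∑_{n ≤ m} a(n)`, Abel summation gives
`∑_{n ≤ N} n a(n) = N S(N) - ∑_{m < N} S(m)`. If `S(m) / m → L`, then `N S(N) / N² → L`, while
`∑_{m < N} S(m) = ∑_{m < N} m (S(m) / m)` is a weighted Cesàro mean with weights `m`, so that
`∑_{m < N} S(m) / N² → L / 2`. The difference tends to `L / 2`; apply this to the restriction
of `f` to `{n : n / σ(n) ≤ u}`.
-/

open Finset

theorem sum_Icc_natCast_mul_eq_sub_sum_range {R : Type*} [CommRing R] (a : ℕ → R) (N : ℕ) :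
    ∑ n ∈ Icc 1 N, (n : R) * a n
      = N * ∑ n ∈ Icc 1 N, a n - ∑ m ∈ range N, ∑ n ∈ Icc 1 m, a n := by
  induction N with
  | zero => simp
  | succ N ih =>
    rw [sum_Icc_succ_top N.succ_pos, ih, sum_Icc_succ_top N.succ_pos, sum_range_succ]
    push_cast
    ring

section

variable {𝕜 : Type*} [RCLike 𝕜]

theorem tendsto_sum_range_natCast_div_sq :
    Tendsto (fun N : ℕ => ((N : 𝕜) ^ 2)⁻¹ * ∑ m ∈ range N, (m : 𝕜)) atTop (nhds (1 / 2)) := by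
  have hsum : ∀ N : ℕ, (∑ m ∈ range N, (m : 𝕜)) * 2 + N = N ^ 2 := by
    intro N
    induction N with
    | zero => simp
    | succ N ih => rw [sum_range_succ]; push_cast; linear_combination ih
  have hlim : Tendsto (fun N : ℕ => (1 - (N : 𝕜)⁻¹) / 2) atTop (nhds (1 / 2)) := by
    simpa using (tendsto_inv_atTop_nhds_zero_nat.const_sub (1 : 𝕜)).div_const (2 : 𝕜)
  refine hlim.congr' ?_
  filter_upwards [eventually_ne_atTop 0] with N hN
  have hN : (N : 𝕜) ≠ 0 := Nat.cast_ne_zero.mpr hN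
  field_simp
  linear_combination -hsum N

theorem tendsto_sum_range_natCast_mul_div_sq {b : ℕ → 𝕜} {c : 𝕜} (hb : Tendsto b atTop (nhds c)) :
    Tendsto (fun N : ℕ => ((N : 𝕜) ^ 2)⁻¹ * ∑ m ∈ range N, (m : 𝕜) * b m) atTop (nhds (c / 2)) := by
  have hmain : Tendsto (fun N : ℕ => ((N : 𝕜) ^ 2)⁻¹ * (∑ m ∈ range N, (m : 𝕜)) * c)
      atTop (nhds (c / 2)) := by
    simpa [div_eq_inv_mul] using tendsto_sum_range_natCast_div_sq.mul_const c
  have herror : Tendsto (fun N : ℕ => ((N : 𝕜) ^ 2)⁻¹ * ∑ m ∈ range N, (m : 𝕜) * (b m - c))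
      atTop (nhds 0) := by
    have hces : Tendsto (fun N : ℕ => (N : ℝ)⁻¹ * ∑ m ∈ range N, ‖b m - c‖) atTop (nhds 0) :=
      (by simpa using (hb.sub_const c).norm : Tendsto (fun m => ‖b m - c‖) atTop (nhds 0)).cesaro
    refine squeeze_zero_norm (fun N => ?_) hces
    calc ‖((N : 𝕜) ^ 2)⁻¹ * ∑ m ∈ range N, (m : 𝕜) * (b m - c)‖
        ≤ ((N : ℝ) ^ 2)⁻¹ * ∑ m ∈ range N, (N : ℝ) * ‖b m - c‖ := by
          rw [norm_mul, norm_inv, norm_pow, RCLike.norm_natCast]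
          gcongr
          refine (norm_sum_le _ _).trans (sum_le_sum fun m hm => ?_)
          rw [norm_mul, RCLike.norm_natCast]
          gcongr
          exact (mem_range.mp hm).le
      _ = (N : ℝ)⁻¹ * ∑ m ∈ range N, ‖b m - c‖ := by
          rw [← mul_sum]
          rcases eq_or_ne (N : ℝ) 0 with hN | hN
          · simp [hN]
          · field_simp
  refine (add_zero (c / 2) ▸ hmain.add herror).congr fun N => ?_
  simp only [mul_sub, sum_sub_distrib, ← sum_mul]
  ring

theorem tendsto_sum_Icc_natCast_mul_div_sq {a : ℕ → 𝕜} {L : 𝕜}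
    (ha : Tendsto (fun N : ℕ => (N : 𝕜)⁻¹ * ∑ n ∈ Icc 1 N, a n) atTop (nhds L)) :
    Tendsto (fun N : ℕ => ((N : 𝕜) ^ 2)⁻¹ * ∑ n ∈ Icc 1 N, (n : 𝕜) * a n)
      atTop (nhds (L / 2)) := by
  -- also true at `m = 0`, where `0⁻¹ = 0`, since the sum over `Icc 1 0` is empty
  have hS : ∀ m : ℕ, ∑ n ∈ Icc 1 m, a n = m * ((m : 𝕜)⁻¹ * ∑ n ∈ Icc 1 m, a n) := by
    intro m
    rcases eq_or_ne m 0 with rfl | hm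
    · simp
    · field_simp
  have hsum : Tendsto (fun N : ℕ => ((N : 𝕜) ^ 2)⁻¹ * ∑ m ∈ range N, ∑ n ∈ Icc 1 m, a n)
      atTop (nhds (L / 2)) := by
    simpa only [← hS] using tendsto_sum_range_natCast_mul_div_sq ha
  refine (sub_half L ▸ ha.sub hsum).congr' ?_
  filter_upwards [eventually_ne_atTop 0] with N hN
  have hN : (N : 𝕜) ≠ 0 := Nat.cast_ne_zero.mpr hN
  rw [sum_Icc_natCast_mul_eq_sub_sum_range]
  field_simp

end

theorem davenport_analogue_weighted_general (f : ℕ → ℂ)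
    (D : ℝ → ℂ)
    (hD : ∀ u ∈ Set.Icc (0 : ℝ) 1,
      Tendsto (fun N : ℕ => (N : ℂ)⁻¹ *
          ∑ n ∈ (Finset.Icc 1 N).filter (fun n : ℕ => sigmaRatio n ≤ u), f n)
        atTop (nhds (D u))) :
    ∀ u ∈ Set.Icc (0 : ℝ) 1,
      Tendsto (fun N : ℕ => ((N : ℂ) ^ 2)⁻¹ *
          ∑ n ∈ (Finset.Icc 1 N).filter (fun n : ℕ => sigmaRatio n ≤ u), (n : ℂ) * f n)
        atTop (nhds (D u / 2)) := by
  intro u hu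
  simpa only [sum_filter, mul_ite, mul_zero] using tendsto_sum_Icc_natCast_mul_div_sq
    (a := fun n => if sigmaRatio n ≤ u then f n else 0) (by simpa only [sum_filter] using hD u hu)

theorem davenport_analogue_weighted (f : ℕ → ℂ)
    (hf1 : f 1 = 1)
    (hfmul : ∀ m n : ℕ, Nat.Coprime m n → f (m * n) = f m * f n)
    (hms : ∃ C : ℝ, ∀ᶠ N : ℕ in atTop, ∑ n ∈ Finset.Icc 1 N, ‖f n‖ ^ 2 ≤ C * N)
    (hmean : ∀ k : ℕ, ∃ c : ℂ,
      Tendsto (fun N : ℕ => (N : ℂ)⁻¹ * ∑ n ∈ Finset.Icc 1 N,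
        f n * ((sigmaRatio n : ℝ) : ℂ) ^ k) atTop (nhds c))
    (D : ℝ → ℂ)
    (hD : ∀ u ∈ Set.Icc (0 : ℝ) 1,
      Tendsto (fun N : ℕ => (N : ℂ)⁻¹ *
          ∑ n ∈ (Finset.Icc 1 N).filter (fun n : ℕ => sigmaRatio n ≤ u), f n)
        atTop (nhds (D u))) :
    ∀ u ∈ Set.Icc (0 : ℝ) 1,
      Tendsto (fun N : ℕ => ((N : ℂ) ^ 2)⁻¹ *
          ∑ n ∈ (Finset.Icc 1 N).filter (fun n : ℕ => sigmaRatio n ≤ u), (n : ℂ) * f n)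
        atTop (nhds (D u / 2)) :=
  davenport_analogue_weighted_general f D hD
end

section
/- Let f be a complex-valued multiplicative function satisfying ∑_p |f(p)−1|/p < ∞ and ∑_p ∑_{j≥2} |f(p^j)|/p^j < ∞, where the sums run over primes p. Then f has a mean value: (1/x) ∑_{n≤x} f(n) converges as x → ∞, and its limit equals the convergent Euler product ∏_p (1 − 1/p)(1 + f(p)/p + f(p²)/p² + ⋯). -/
/-!
Write `f = g * ζ` with `g = f * μ`, so that `∑_{n ≤ N} f n = ∑_{d ≤ N} g d ⌊N / d⌋`; once
`∑ |g d| / d` converges, dominated convergence gives the mean value `∑ g d / d`. The function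
`g n / n` is multiplicative with `g (p ^ (k + 1)) = f (p ^ (k + 1)) - f (p ^ k)`, so its local
factor at `p` telescopes to `(1 - 1/p) ∑ f (p ^ j) / p ^ j`, and the two hypotheses make
`c p = ∑_{k ≥ 1} |g (p ^ k)| / p ^ k` summable over the primes. The partial sums of `|g n| / n`
are then bounded by `∏_p (1 + c p) ≤ exp (∑_p c p)`, and the Euler product for `g n / n`
identifies the mean value with the product of the local factors.
-/

open Filter Topology ArithmeticFunction
open scoped ArithmeticFunction.zeta ArithmeticFunction.Moebius

section Telescoping

variable {R : Type*} {u v : ℕ → R} {r : R}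

theorem HasSum.of_succ_eq_sub_mul [Ring R] [TopologicalSpace R] [IsTopologicalRing R] {s : R}
    (hu : HasSum u s) (h₀ : v 0 = u 0) (hsucc : ∀ k, v (k + 1) = u (k + 1) - r * u k) :
    HasSum v ((1 - r) * s) := by
  have hshift : HasSum (fun k ↦ u (k + 1)) (s - u 0) := by
    simpa using (hasSum_nat_add_iff' 1).mpr hu
  have hv : HasSum (fun k ↦ v (k + 1)) (s - u 0 - r * s) := by
    simpa only [hsucc] using hshift.sub (hu.mul_left r)
  have hval : (1 - r) * s - ∑ i ∈ Finset.range 1, v i = s - u 0 - r * s := by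
    rw [Finset.sum_range_one, h₀]
    noncomm_ring
  exact (hasSum_nat_add_iff' 1).mp (hval ▸ hv)

variable [NormedRing R]

theorem norm_succ_le_of_succ_eq_sub_mul (hsucc : ∀ k, v (k + 1) = u (k + 1) - r * u k) (k : ℕ) :
    ‖v (k + 1)‖ ≤ ‖u (k + 1)‖ + ‖r‖ * ‖u k‖ := by
  rw [hsucc]
  exact (norm_sub_le _ _).trans (add_le_add_right (norm_mul_le _ _) _)

theorem summable_norm_of_succ_eq_sub_mul (hu : Summable (‖u ·‖))
    (hsucc : ∀ k, v (k + 1) = u (k + 1) - r * u k) : Summable (‖v ·‖) :=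
  (summable_nat_add_iff 1).mp <| .of_nonneg_of_le (fun _ ↦ norm_nonneg _)
    (norm_succ_le_of_succ_eq_sub_mul hsucc)
    (((summable_nat_add_iff 1).mpr hu).add (hu.mul_left ‖r‖))

theorem tsum_norm_succ_le_of_succ_eq_sub_mul (hu : Summable (‖u ·‖)) (hu₀ : u 0 = 1)
    (hr : ‖r‖ ≤ 1) (hsucc : ∀ k, v (k + 1) = u (k + 1) - r * u k) :
    ∑' k, ‖v (k + 1)‖ ≤ 2 * ‖v 1‖ + ‖r‖ ^ 2 + 2 * ∑' k, ‖u (k + 2)‖ := by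
  set T := ∑' k, ‖u (k + 2)‖
  have hu₁ : Summable fun k ↦ ‖u (k + 1)‖ := (summable_nat_add_iff 1).mpr hu
  have hu₂ : Summable fun k ↦ ‖u (k + 2)‖ := (summable_nat_add_iff 2).mpr hu
  have hv_shift : Summable fun k ↦ ‖v (k + 1)‖ :=
    (summable_nat_add_iff 1).mpr (summable_norm_of_succ_eq_sub_mul hu hsucc)
  have htail : ∑' k, ‖v (k + 2)‖ ≤ T + ‖r‖ * (‖u 1‖ + T) := by
    rw [← hu₁.tsum_eq_zero_add, ← tsum_mul_left, ← hu₂.tsum_add (hu₁.mul_left _)]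
    exact ((summable_nat_add_iff 1).mpr hv_shift).tsum_le_tsum
      (fun k ↦ norm_succ_le_of_succ_eq_sub_mul hsucc (k + 1)) (hu₂.add (hu₁.mul_left _))
  have hu_one_le : ‖u 1‖ ≤ ‖v 1‖ + ‖r‖ := by
    have hv_one : v 1 = u 1 - r := by simpa [hu₀] using hsucc 0
    simpa [hv_one] using norm_add_le (u 1 - r) r
  have hT : 0 ≤ T := tsum_nonneg fun _ ↦ norm_nonneg _
  rw [hv_shift.tsum_eq_zero_add]
  linarith [mul_le_mul_of_nonneg_left hu_one_le (norm_nonneg r), mul_le_mul_of_nonneg_right hr hT,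
    mul_le_mul_of_nonneg_right hr (norm_nonneg (v 1))]

end Telescoping

theorem tendsto_natCast_div_div_atTop (d : ℕ) :
    Tendsto (fun N : ℕ ↦ ((N / d : ℕ) : ℝ) / N) atTop (𝓝 (d : ℝ)⁻¹) := by
  rcases eq_or_ne d 0 with rfl | hd
  · simp
  have hfloor (N : ℕ) : ((N / d : ℕ) : ℝ) / N = ⌊(N : ℝ) / d⌋₊ / ((N : ℝ) / d) * (d : ℝ)⁻¹ := by
    rw [Nat.floor_div_eq_div]
    rcases eq_or_ne N 0 with rfl | hN
    · simp
    · field_simp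
  simp_rw [hfloor]
  simpa using (tendsto_nat_floor_div_atTop.comp <| tendsto_natCast_atTop_atTop.atTop_div_const
    (Nat.cast_pos.mpr (Nat.pos_of_ne_zero hd))).mul_const (d : ℝ)⁻¹

theorem natCast_div_div_le (N d : ℕ) : ((N / d : ℕ) : ℝ) / N ≤ (d : ℝ)⁻¹ :=
  div_le_of_le_mul₀ N.cast_nonneg (inv_nonneg.mpr d.cast_nonneg) <|
    Nat.cast_div_le.trans_eq (div_eq_inv_mul _ _)

namespace EulerProduct

theorem summable_norm_of_summable_tsum_norm_prime_pow {R : Type*} [NormedDivisionRing R]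
    {f : ℕ → R} (hf₁ : f 1 = 1) (hmul : ∀ {m n}, m.Coprime n → f (m * n) = f m * f n)
    (hf₀ : f 0 = 0) (hloc : ∀ p : Nat.Primes, Summable fun e ↦ ‖f ((p : ℕ) ^ e)‖)
    (hsum : Summable fun p : Nat.Primes ↦ ∑' e, ‖f ((p : ℕ) ^ (e + 1))‖) :
    Summable (‖f ·‖) := by
  refine summable_of_sum_range_le (fun _ ↦ norm_nonneg _)
    (c := Real.exp (∑' p : Nat.Primes, ∑' e, ‖f ((p : ℕ) ^ (e + 1))‖)) fun N ↦ ?_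
  obtain ⟨-, hprod⟩ := summable_and_hasSum_smoothNumbers_prod_primesBelow_tsum (f := (‖f ·‖))
    (by simp [hf₁]) (fun h ↦ by rw [hmul h, norm_mul])
    (fun {p} hp ↦ by simpa only [norm_norm] using hloc ⟨p, hp⟩) N
  calc ∑ n ∈ Finset.range N, ‖f n‖
      = ∑ m ∈ (Finset.range N).subtype (· ∈ N.smoothNumbers), ‖f m‖ := by
        rw [Finset.sum_subtype_eq_sum_filter (fun m ↦ ‖f m‖), Finset.sum_filter_of_ne]
        intro n hn hfn
        refine Nat.mem_smoothNumbers_of_lt (Nat.pos_of_ne_zero ?_) (Finset.mem_range.mp hn)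
        rintro rfl
        simp [hf₀] at hfn
    _ ≤ ∑' m : N.smoothNumbers, ‖f m‖ := hprod.summable.sum_le_tsum _ fun _ _ ↦ norm_nonneg _
    _ = ∏ p ∈ N.primesBelow, (1 + ∑' e, ‖f (p ^ (e + 1))‖) := by
        refine hprod.tsum_eq.trans (Finset.prod_congr rfl fun p hp ↦ ?_)
        rw [(hloc ⟨p, Nat.prime_of_mem_primesBelow hp⟩).tsum_eq_zero_add, pow_zero, hf₁, norm_one]
    _ ≤ Real.exp (∑ p ∈ N.primesBelow, ∑' e, ‖f (p ^ (e + 1))‖) :=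
        Real.prod_one_add_le_exp_sum _ fun _ ↦ tsum_nonneg fun _ ↦ norm_nonneg _
    _ = Real.exp (∑ p ∈ N.primesBelow.subtype Nat.Prime, ∑' e, ‖f ((p : ℕ) ^ (e + 1))‖) := by
        rw [Finset.sum_subtype_eq_sum_filter (fun p ↦ ∑' e, ‖f (p ^ (e + 1))‖),
          Finset.filter_true_of_mem fun p hp ↦ Nat.prime_of_mem_primesBelow hp]
    _ ≤ Real.exp (∑' p : Nat.Primes, ∑' e, ‖f ((p : ℕ) ^ (e + 1))‖) := by
        -- the finset lives in `{p // p.Prime}`, which instance search does not unfold to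
        -- `Nat.Primes`, so the summation filter has to be given
        refine Real.exp_le_exp.mpr <| hsum.sum_le_tsum (L := .unconditional _) _ fun _ _ ↦ ?_
        exact tsum_nonneg fun _ ↦ norm_nonneg _

end EulerProduct

theorem toArithmeticFunction_apply_of_ne_zero {R : Type*} [Zero R] (f : ℕ → R) {n : ℕ}
    (hn : n ≠ 0) : toArithmeticFunction f n = f n :=
  if_neg hn

theorem isMultiplicative_toArithmeticFunction {R : Type*} [MonoidWithZero R] {f : ℕ → R}
    (hf₁ : f 1 = 1) (hmul : ∀ m n, m.Coprime n → f (m * n) = f m * f n) :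
    (toArithmeticFunction f).IsMultiplicative := by
  refine ⟨by simp [toArithmeticFunction, hf₁], fun {m n} h ↦ ?_⟩
  rcases eq_or_ne m 0 with rfl | hm
  · simp
  rcases eq_or_ne n 0 with rfl | hn
  · simp
  simp only [toArithmeticFunction_apply_of_ne_zero _ (mul_ne_zero hm hn),
    toArithmeticFunction_apply_of_ne_zero _ hm, toArithmeticFunction_apply_of_ne_zero _ hn,
    hmul m n h]

namespace ArithmeticFunction

theorem IsMultiplicative.map_mul_div_natCast {K : Type*} [Field K] {g : ArithmeticFunction K}
    (hg : g.IsMultiplicative) {m n : ℕ} (h : m.Coprime n) :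
    g (m * n) / ((m * n : ℕ) : K) = g m / m * (g n / n) := by
  rw [hg.map_mul_of_coprime h, Nat.cast_mul, mul_div_mul_comm]

theorem mul_moebius_apply_prime_pow_succ {R : Type*} [CommRing R] (F : ArithmeticFunction R)
    {p : ℕ} (hp : p.Prime) (k : ℕ) :
    (F * μ) (p ^ (k + 1)) = F (p ^ (k + 1)) - F (p ^ k) := by
  have hF (j : ℕ) : F (p ^ j) = ∑ i ∈ Finset.range (j + 1), (F * μ) (p ^ i) := by
    rw [← Nat.sum_divisors_prime_pow hp, ← coe_mul_zeta_apply, mul_assoc,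
      coe_moebius_mul_coe_zeta, mul_one]
  rw [hF (k + 1), hF k, Finset.sum_range_succ, add_sub_cancel_left]

variable {𝕜 : Type*} [RCLike 𝕜]

theorem tendsto_inv_mul_sum_Ioc_of_summable_mul_moebius {F : ArithmeticFunction 𝕜}
    (hF : Summable fun d ↦ ‖(F * μ) d / d‖) :
    Tendsto (fun N : ℕ ↦ (N : 𝕜)⁻¹ * ∑ n ∈ Finset.Ioc 0 N, F n) atTop
      (𝓝 (∑' d, (F * μ) d / d)) := by
  set g : ArithmeticFunction 𝕜 := F * μ
  have hsum (N : ℕ) : (N : 𝕜)⁻¹ * ∑ n ∈ Finset.Ioc 0 N, F n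
      = ∑' d, g d * (((N / d : ℕ) : ℝ) / N : ℝ) := by
    rw [← mul_one F, ← coe_moebius_mul_coe_zeta, ← mul_assoc, sum_Ioc_mul_zeta_eq_sum,
      Finset.mul_sum, tsum_eq_sum (s := Finset.Ioc 0 N)]
    · refine Finset.sum_congr rfl fun d _ ↦ ?_
      push_cast
      ring
    · intro d hd
      rw [Finset.mem_Ioc, not_and_or, not_lt, Nat.le_zero, not_le] at hd
      rcases hd with rfl | hd
      · simp
      · simp [Nat.div_eq_of_lt hd]
  simp_rw [hsum, div_eq_mul_inv (g _)]
  refine tendsto_tsum_of_dominated_convergence hF (fun d ↦ ?_) (.of_forall fun N d ↦ ?_)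
  · simpa using ((RCLike.continuous_ofReal.tendsto _).comp
      (tendsto_natCast_div_div_atTop d)).const_mul (g d)
  · rw [norm_mul, RCLike.norm_ofReal, abs_of_nonneg (by positivity), norm_div,
      RCLike.norm_natCast, div_eq_mul_inv]
    exact mul_le_mul_of_nonneg_left (natCast_div_div_le N d) (norm_nonneg _)

end ArithmeticFunction

section Wintner

variable {𝕜 : Type*} [RCLike 𝕜] {f : ℕ → 𝕜} {p : ℕ}

theorem norm_div_natCast_pow (x : 𝕜) (p j : ℕ) : ‖x / (p : 𝕜) ^ j‖ = ‖x‖ / (p : ℝ) ^ j := by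
  rw [norm_div, norm_pow, RCLike.norm_natCast]

theorem mul_moebius_div_prime_pow_succ (hp : p.Prime) (k : ℕ) :
    (toArithmeticFunction f * μ) (p ^ (k + 1)) / (p : 𝕜) ^ (k + 1)
      = f (p ^ (k + 1)) / (p : 𝕜) ^ (k + 1) - (p : 𝕜)⁻¹ * (f (p ^ k) / (p : 𝕜) ^ k) := by
  have hp0 : (p : 𝕜) ≠ 0 := Nat.cast_ne_zero.mpr hp.ne_zero
  rw [mul_moebius_apply_prime_pow_succ _ hp,
    toArithmeticFunction_apply_of_ne_zero _ (pow_ne_zero _ hp.ne_zero),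
    toArithmeticFunction_apply_of_ne_zero _ (pow_ne_zero _ hp.ne_zero)]
  field_simp
  ring

theorem hasSum_mul_moebius_div_prime_pow (hf₁ : f 1 = 1) (hp : p.Prime)
    (hf : Summable fun j ↦ f (p ^ j) / (p : 𝕜) ^ j) :
    HasSum (fun e ↦ (toArithmeticFunction f * μ) (p ^ e) / (p : 𝕜) ^ e)
      ((1 - (p : 𝕜)⁻¹) * ∑' j, f (p ^ j) / (p : 𝕜) ^ j) :=
  hf.hasSum.of_succ_eq_sub_mul (by simp [toArithmeticFunction_apply_of_ne_zero, hf₁])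
    (mul_moebius_div_prime_pow_succ hp)

theorem tsum_norm_mul_moebius_div_prime_pow_succ_le (hf₁ : f 1 = 1) (hp : p.Prime)
    (hf : Summable fun j ↦ ‖f (p ^ j)‖ / (p : ℝ) ^ j) :
    ∑' k, ‖(toArithmeticFunction f * μ) (p ^ (k + 1)) / (p : 𝕜) ^ (k + 1)‖
      ≤ 2 * (‖f p - 1‖ / p) + ((p : ℝ) ^ 2)⁻¹
        + 2 * ∑' k, ‖f (p ^ (k + 2))‖ / (p : ℝ) ^ (k + 2) := by
  have hv₁ : (toArithmeticFunction f * μ) (p ^ 1) / (p : 𝕜) ^ 1 = (f p - 1) / (p : 𝕜) ^ 1 := by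
    rw [mul_moebius_div_prime_pow_succ hp 0]
    simp [hf₁, sub_div]
  have hr : ‖(p : 𝕜)⁻¹‖ ≤ 1 := by
    rw [norm_inv, RCLike.norm_natCast]
    exact inv_le_one_of_one_le₀ (by exact_mod_cast hp.one_lt.le)
  have := tsum_norm_succ_le_of_succ_eq_sub_mul (u := fun j ↦ f (p ^ j) / (p : 𝕜) ^ j)
    (v := fun e ↦ (toArithmeticFunction f * μ) (p ^ e) / (p : 𝕜) ^ e)
    (by simpa only [norm_div_natCast_pow] using hf) (by simp [hf₁]) hr
    (mul_moebius_div_prime_pow_succ hp)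
  simp only [hv₁] at this
  simpa only [norm_div, norm_pow, norm_inv, RCLike.norm_natCast, pow_one, inv_pow] using this

theorem summable_norm_div_prime_pow_of_summable_prod
    (hpj : Summable fun pj : Nat.Primes × ℕ ↦
      ‖f ((pj.1 : ℕ) ^ (pj.2 + 2))‖ / ((pj.1 : ℕ) : ℝ) ^ (pj.2 + 2)) (p : Nat.Primes) :
    Summable fun j ↦ ‖f ((p : ℕ) ^ j)‖ / (p : ℝ) ^ j :=
  (summable_nat_add_iff 2).mp (hpj.prod_factor p)

variable (hf₁ : f 1 = 1) (hmul : ∀ m n, m.Coprime n → f (m * n) = f m * f n)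
  (hp : Summable fun p : Nat.Primes ↦ ‖f (p : ℕ) - 1‖ / (p : ℕ))
  (hpj : Summable fun pj : Nat.Primes × ℕ ↦
    ‖f ((pj.1 : ℕ) ^ (pj.2 + 2))‖ / ((pj.1 : ℕ) : ℝ) ^ (pj.2 + 2))
include hf₁ hmul hp hpj

theorem summable_norm_mul_moebius_div :
    Summable fun n ↦ ‖(toArithmeticFunction f * μ) n / n‖ := by
  have hg := (isMultiplicative_toArithmeticFunction hf₁ hmul).mul isMultiplicative_moebius.intCast
  have hloc := summable_norm_div_prime_pow_of_summable_prod hpj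
  have hinv : Summable fun p : Nat.Primes ↦ ((p : ℝ) ^ 2)⁻¹ :=
    (Real.summable_nat_pow_inv.mpr one_lt_two).comp_injective Nat.Primes.coe_nat_injective
  refine EulerProduct.summable_norm_of_summable_tsum_norm_prime_pow
    (f := fun n ↦ (toArithmeticFunction f * μ) n / n) (by simp [hg.map_one])
    hg.map_mul_div_natCast (by simp) (fun p ↦ ?_) ?_
  · simpa only [Nat.cast_pow] using summable_norm_of_succ_eq_sub_mul
      (u := fun j ↦ f (p ^ j) / (p : 𝕜) ^ j)
      (v := fun e ↦ (toArithmeticFunction f * μ) (p ^ e) / (p : 𝕜) ^ e)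
      (by simpa only [norm_div_natCast_pow] using hloc p) (mul_moebius_div_prime_pow_succ p.prop)
  · refine .of_nonneg_of_le (fun _ ↦ tsum_nonneg fun _ ↦ norm_nonneg _) (fun p ↦ ?_)
      (((hp.mul_left 2).add hinv).add (hpj.prod.mul_left 2))
    simpa only [Nat.cast_pow] using tsum_norm_mul_moebius_div_prime_pow_succ_le hf₁ p.prop (hloc p)

theorem hasProd_one_sub_inv_mul_tsum :
    HasProd (fun p : Nat.Primes ↦ (1 - ((p : ℕ) : 𝕜)⁻¹) * ∑' j, f ((p : ℕ) ^ j) / ((p : ℕ) : 𝕜) ^ j)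
      (∑' n, (toArithmeticFunction f * μ) n / n) := by
  have hg := (isMultiplicative_toArithmeticFunction hf₁ hmul).mul isMultiplicative_moebius.intCast
  convert EulerProduct.eulerProduct_hasProd (f := fun n ↦ (toArithmeticFunction f * μ) n / n)
    (by simp [hg.map_one]) hg.map_mul_div_natCast (summable_norm_mul_moebius_div hf₁ hmul hp hpj)
    (by simp) using 2 with p
  have hloc : Summable fun j ↦ f ((p : ℕ) ^ j) / ((p : ℕ) : 𝕜) ^ j := .of_norm <| by
    simpa only [norm_div_natCast_pow] using summable_norm_div_prime_pow_of_summable_prod hpj p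
  rw [← (hasSum_mul_moebius_div_prime_pow hf₁ p.prop hloc).tsum_eq]
  simp only [Nat.cast_pow]

end Wintner

theorem wintner_mean_value (f : ℕ → ℂ)
    (hf1 : f 1 = 1)
    (hfmul : ∀ m n : ℕ, Nat.Coprime m n → f (m * n) = f m * f n)
    (hp : Summable (fun p : Nat.Primes => ‖f (p : ℕ) - 1‖ / (p : ℕ)))
    (hpj : Summable (fun pj : Nat.Primes × ℕ =>
      ‖f ((pj.1 : ℕ) ^ (pj.2 + 2))‖ / ((pj.1 : ℕ) : ℝ) ^ (pj.2 + 2))) :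
    Multipliable (fun p : Nat.Primes =>
      (1 - (((p : ℕ) : ℂ))⁻¹) * ∑' j : ℕ, f ((p : ℕ) ^ j) / ((p : ℕ) : ℂ) ^ j) ∧
    Tendsto (fun N : ℕ => (N : ℂ)⁻¹ * ∑ n ∈ Finset.Icc 1 N, f n) atTop
      (nhds (∏' p : Nat.Primes,
        (1 - (((p : ℕ) : ℂ))⁻¹) * ∑' j : ℕ, f ((p : ℕ) ^ j) / ((p : ℕ) : ℂ) ^ j)) := by
  have hprod := hasProd_one_sub_inv_mul_tsum hf1 hfmul hp hpj
  refine ⟨hprod.multipliable, hprod.tprod_eq ▸ ?_⟩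
  refine (tendsto_inv_mul_sum_Ioc_of_summable_mul_moebius
    (summable_norm_mul_moebius_div hf1 hfmul hp hpj)).congr fun N ↦ ?_
  rw [← Finset.Icc_add_one_left_eq_Ioc, zero_add]
  refine congrArg _ (Finset.sum_congr rfl fun n hn ↦ toArithmeticFunction_apply_of_ne_zero f ?_)
  exact (Nat.one_le_iff_ne_zero.mp (Finset.mem_Icc.mp hn).1)
end

section
/- Let f be a multiplicative function from the positive integers to the complex numbers that is bounded in mean square, and suppose that for every nonnegative integer k the function n ↦ f(n)·(n/σ(n))^k possesses a mean value, so that D_f(u) := lim_{x→∞} (1/x) ∑_{n≤x, n/σ(n)≤u} f(n) exists for all u ∈ [0,1]. Let D(u) denote Davenport's distribution function D(u) = lim_{x→∞} (1/x) #{n ≤ x : n/σ(n) ≤ u}. Then there is a constant C (depending only on f) such that for all u, v ∈ [0,1], |D_f(u) − D_f(v)| ≤ C·|D(u) − D(v)|^{1/2}. -/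
open Filter ArithmeticFunction

/-!
For `v ≤ u`, `D_f(u) - D_f(v)` is the limit of `N⁻¹` times the sum of `f(n)` over the `n ≤ N` with
`v < n/σ(n) ≤ u`, and `D(u) - D(v)` is the limit of the proportion of such `n`. By Cauchy–Schwarz
that sum is at most the square root of the number of its terms times `∑_{n ≤ N} |f(n)|²`, and the
latter is `O(N)` by the mean-square hypothesis.
-/

open Finset Topology

section
variable {ι : Type*}

theorem norm_sum_sub_sum_sq_le {E : Type*} [SeminormedAddCommGroup E] {f : ι → E}
    {A B S : Finset ι} (hAB : A ⊆ B) (hBS : B ⊆ S) :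
    ‖∑ i ∈ B, f i - ∑ i ∈ A, f i‖ ^ 2 ≤ ((#B : ℝ) - #A) * ∑ i ∈ S, ‖f i‖ ^ 2 := by
  classical
  rw [← sum_sdiff_eq_sub hAB, ← Nat.cast_sub (card_le_card hAB), ← card_sdiff_of_subset hAB]
  calc ‖∑ i ∈ B \ A, f i‖ ^ 2 ≤ (∑ i ∈ B \ A, ‖f i‖) ^ 2 := by gcongr; exact norm_sum_le _ _
    _ ≤ (#(B \ A) : ℝ) * ∑ i ∈ B \ A, ‖f i‖ ^ 2 := sq_sum_le_card_mul_sum_sq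
    _ ≤ (#(B \ A) : ℝ) * ∑ i ∈ S, ‖f i‖ ^ 2 := by
      gcongr
      exact sdiff_subset.trans hBS

variable {𝕜 : Type*} [RCLike 𝕜] {f : ι → 𝕜}

theorem norm_avg_sub_avg_sq_le {A B S : Finset ι} {N : ℕ} {C : ℝ} (hAB : A ⊆ B) (hBS : B ⊆ S)
    (hS : ∑ i ∈ S, ‖f i‖ ^ 2 ≤ C * N) :
    ‖(N : 𝕜)⁻¹ * ∑ i ∈ B, f i - (N : 𝕜)⁻¹ * ∑ i ∈ A, f i‖ ^ 2 ≤ C * (#B / N - #A / N) := by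
  rcases N.eq_zero_or_pos with rfl | hN
  · simp
  have hN' : (0 : ℝ) < N := by exact_mod_cast hN
  rw [← mul_sub, norm_mul, norm_inv, RCLike.norm_natCast, ← sub_div, mul_pow,
    inv_pow, inv_mul_le_iff₀ (by positivity)]
  calc ‖∑ i ∈ B, f i - ∑ i ∈ A, f i‖ ^ 2 ≤ ((#B : ℝ) - #A) * ∑ i ∈ S, ‖f i‖ ^ 2 :=
        norm_sum_sub_sum_sq_le hAB hBS
    _ ≤ ((#B : ℝ) - #A) * (C * N) := by
        gcongr
        exact sub_nonneg.mpr (Nat.cast_le.mpr (card_le_card hAB))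
    _ = (N : ℝ) ^ 2 * (C * ((#B - #A) / N)) := by field_simp

theorem norm_sub_le_of_tendsto_avg {A B S : ℕ → Finset ι} {C α β : ℝ} {a b : 𝕜}
    (hAB : ∀ N, A N ⊆ B N) (hBS : ∀ N, B N ⊆ S N)
    (hS : ∀ᶠ N : ℕ in atTop, ∑ i ∈ S N, ‖f i‖ ^ 2 ≤ C * N)
    (ha : Tendsto (fun N : ℕ ↦ (N : 𝕜)⁻¹ * ∑ i ∈ A N, f i) atTop (𝓝 a))
    (hb : Tendsto (fun N : ℕ ↦ (N : 𝕜)⁻¹ * ∑ i ∈ B N, f i) atTop (𝓝 b))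
    (hα : Tendsto (fun N : ℕ ↦ (#(A N) : ℝ) / N) atTop (𝓝 α))
    (hβ : Tendsto (fun N : ℕ ↦ (#(B N) : ℝ) / N) atTop (𝓝 β)) :
    ‖b - a‖ ≤ √C * √|β - α| := by
  have hαβ : α ≤ β := le_of_tendsto_of_tendsto' hα hβ fun N ↦
    div_le_div_of_nonneg_right (Nat.cast_le.mpr (card_le_card (hAB N))) N.cast_nonneg
  have hsq : ‖b - a‖ ^ 2 ≤ C * (β - α) :=
    le_of_tendsto_of_tendsto ((hb.sub ha).norm.pow 2) ((hβ.sub hα).const_mul C) <|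
      hS.mono fun N ↦ norm_avg_sub_avg_sq_le (hAB N) (hBS N)
  rw [abs_of_nonneg (sub_nonneg.mpr hαβ), ← Real.sqrt_mul' _ (sub_nonneg.mpr hαβ)]
  exact Real.le_sqrt_of_sq_le hsq

end

theorem Df_holder_bound_general (f : ℕ → ℂ)
    (hms : ∃ C : ℝ, ∀ᶠ N : ℕ in atTop, ∑ n ∈ Finset.Icc 1 N, ‖f n‖ ^ 2 ≤ C * N)
    (Df : ℝ → ℂ)
    (hDf : ∀ u ∈ Set.Icc (0 : ℝ) 1,
      Tendsto (fun N : ℕ => (N : ℂ)⁻¹ *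
          ∑ n ∈ (Finset.Icc 1 N).filter (fun n : ℕ => sigmaRatio n ≤ u), f n)
        atTop (nhds (Df u)))
    (D : ℝ → ℝ)
    (hD : ∀ u ∈ Set.Icc (0 : ℝ) 1,
      Tendsto (fun N : ℕ =>
          (((Finset.Icc 1 N).filter (fun n : ℕ => sigmaRatio n ≤ u)).card : ℝ) / N)
        atTop (nhds (D u))) :
    ∃ C : ℝ, ∀ u ∈ Set.Icc (0 : ℝ) 1, ∀ v ∈ Set.Icc (0 : ℝ) 1,
      ‖Df u - Df v‖ ≤ C * Real.sqrt |D u - D v| := by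
  obtain ⟨C, hC⟩ := hms
  refine ⟨√C, fun u hu v hv ↦ ?_⟩
  wlog hvu : v ≤ u generalizing u v
  · simpa only [norm_sub_rev, abs_sub_comm] using this v hv u hu (le_of_not_ge hvu)
  exact norm_sub_le_of_tendsto_avg
    (fun N ↦ monotone_filter_right _ fun n _ hn ↦ hn.trans hvu) (fun N ↦ filter_subset _ _)
    hC (hDf v hv) (hDf u hu) (hD v hv) (hD u hu)

theorem Df_holder_bound (f : ℕ → ℂ)
    (hf1 : f 1 = 1)
    (hfmul : ∀ m n : ℕ, Nat.Coprime m n → f (m * n) = f m * f n)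
    (hms : ∃ C : ℝ, ∀ᶠ N : ℕ in atTop, ∑ n ∈ Finset.Icc 1 N, ‖f n‖ ^ 2 ≤ C * N)
    (hmean : ∀ k : ℕ, ∃ c : ℂ,
      Tendsto (fun N : ℕ => (N : ℂ)⁻¹ * ∑ n ∈ Finset.Icc 1 N,
        f n * ((sigmaRatio n : ℝ) : ℂ) ^ k) atTop (nhds c))
    (Df : ℝ → ℂ)
    (hDf : ∀ u ∈ Set.Icc (0 : ℝ) 1,
      Tendsto (fun N : ℕ => (N : ℂ)⁻¹ *
          ∑ n ∈ (Finset.Icc 1 N).filter (fun n : ℕ => sigmaRatio n ≤ u), f n)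
        atTop (nhds (Df u)))
    (D : ℝ → ℝ)
    (hD : ∀ u ∈ Set.Icc (0 : ℝ) 1,
      Tendsto (fun N : ℕ =>
          (((Finset.Icc 1 N).filter (fun n : ℕ => sigmaRatio n ≤ u)).card : ℝ) / N)
        atTop (nhds (D u))) :
    ∃ C : ℝ, ∀ u ∈ Set.Icc (0 : ℝ) 1, ∀ v ∈ Set.Icc (0 : ℝ) 1,
      ‖Df u - Df v‖ ≤ C * Real.sqrt |D u - D v| :=
  Df_holder_bound_general f hms Df hDf D hD
end
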